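/- arXiv:q-bio/0702027 — 4 statements merged into one kernel-verified Lean document; each statement's English description precedes it below -/
import Mathlib

section
/- Consider a stochastic SIR epidemic on a finite population with infectious contact interval matrix τ (with τ_{ij} ∈ (0,∞]) and importation times t_{0i} ∈ [0,∞], where infection times are defined recursively by t_j = min(t_{0j}, min_{i≠j} (t_i + τ_{ij})) (with the convention ∞ + x = ∞). Define the epidemic percolation network as the directed graph with an edge from i to j iff τ_{ij} < ∞. Then a node j satisfies t_j < ∞ if and only if j lies in the out-component (in the percolation network) of some node i with t_{0i} < ∞. -/
open Relation ENNReal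

/-- SIR reachability: a node `j` is infected (`t j < ∞`) iff `j` lies in the
out-component, in the epidemic percolation network (directed edge `i → j` iff
`τ i j < ∞`), of some node `i` with finite importation time.  Here `t` is the
minimal fixed point of the recursion
`t j = min (t0 j) (⨅ i ≠ j, t i + τ i j)`. -/
theorem sir_infection_iff_outComponent
    {n : ℕ} (τ : Fin n → Fin n → ℝ≥0∞) (hτ : ∀ i j, 0 < τ i j)
    (t0 : Fin n → ℝ≥0∞) (t : Fin n → ℝ≥0∞)
    (hfix : ∀ j, t j = min (t0 j) (⨅ i : {i : Fin n // i ≠ j}, t i + τ i j))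
    (hmin : ∀ s : Fin n → ℝ≥0∞,
      (∀ j, s j = min (t0 j) (⨅ i : {i : Fin n // i ≠ j}, s i + τ i j)) →
      ∀ j, t j ≤ s j) :
    ∀ j : Fin n, t j < ⊤ ↔
      ∃ i : Fin n, t0 i < ⊤ ∧
        ReflTransGen (fun a b : Fin n => a ≠ b ∧ τ a b < ⊤) i j := by
  intro j
  constructor
  · -- forward: strong induction on the number of nodes with smaller t value
    have key : ∀ m : ℕ, ∀ j : Fin n,
        (Finset.univ.filter fun k => t k < t j).card = m → t j < ⊤ →
        ∃ i : Fin n, t0 i < ⊤ ∧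
          ReflTransGen (fun a b : Fin n => a ≠ b ∧ τ a b < ⊤) i j := by
      intro m
      induction m using Nat.strong_induction_on with
      | _ m ih =>
        intro j hcard hj
        by_cases h0 : t0 j < ⊤
        · exact ⟨j, h0, ReflTransGen.refl⟩
        · push_neg at h0
          have h0' : t0 j = ⊤ := top_le_iff.mp h0
          have hI : (⨅ i : {i : Fin n // i ≠ j}, t i + τ i j) < ⊤ := by
            have := hfix j
            rw [h0'] at this
            simpa [this] using hj
          have hne : Nonempty {i : Fin n // i ≠ j} := by
            by_contra h
            rw [not_nonempty_iff] at h
            simp [iInf_of_empty] at hI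
          obtain ⟨i, hi⟩ := Finite.exists_min (fun i : {i : Fin n // i ≠ j} => t i + τ i j)
          have hIi : (⨅ i : {i : Fin n // i ≠ j}, t i + τ i j) = t i + τ i j :=
            le_antisymm (iInf_le _ i) (le_iInf hi)
          have htj : t j = t i.1 + τ i.1 j := by
            have := hfix j
            rw [h0', hIi] at this
            simpa using this
          have hti_lt : t i.1 < t j := by
            rw [htj]
            exact ENNReal.lt_add_right (by rw [htj] at hj; exact (lt_top_iff_ne_top.mp
              (lt_of_le_of_lt le_self_add hj))) (hτ i.1 j).ne'
          have hτij : τ i.1 j < ⊤ := by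
            rw [htj] at hj
            exact lt_of_le_of_lt le_add_self hj
          have hsub : (Finset.univ.filter fun k => t k < t i.1) ⊂
              (Finset.univ.filter fun k => t k < t j) := by
            constructor
            · intro k hk
              simp only [Finset.mem_filter, Finset.mem_univ, true_and] at hk ⊢
              exact hk.trans hti_lt
            · intro h
              have : i.1 ∈ (Finset.univ.filter fun k => t k < t i.1) := by
                apply h
                simp only [Finset.mem_filter, Finset.mem_univ, true_and]
                exact hti_lt
              simp at this
          have hclt : (Finset.univ.filter fun k => t k < t i.1).card < m := by
            rw [← hcard]
            exact Finset.card_lt_card hsub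
          obtain ⟨a, ha, hpath⟩ := ih _ hclt i.1 rfl (hti_lt.trans hj)
          exact ⟨a, ha, hpath.tail ⟨i.2, hτij⟩⟩
    exact fun hj => key _ j rfl hj
  · rintro ⟨i, hi, hpath⟩
    induction hpath with
    | refl =>
      have := hfix i
      calc t i ≤ t0 i := by rw [this]; exact min_le_left _ _
        _ < ⊤ := hi
    | @tail b c hab hbc ihp =>
      obtain ⟨hne, hτbc⟩ := hbc
      have hle : t c ≤ t b + τ b c := by
        rw [hfix c]
        exact le_trans (min_le_right _ _) (iInf_le _ (⟨b, hne⟩ : {i : Fin n // i ≠ c}))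
      exact lt_of_le_of_lt hle (ENNReal.add_lt_top.mpr ⟨ihp, hτbc⟩)
end

section
/- In the stochastic SIR model with infection times defined by the minimal fixed point of t_j = min(t_{0j}, min_{i≠j}(t_i + τ_{ij})), a node j is infected (t_j < ∞) if and only if the in-component of j in the epidemic percolation network (the directed graph with edge i→j iff τ_{ij} < ∞) contains a node i with t_{0i} < ∞. -/
open Relation ENNReal

/-- SIR reachability (in-component form): a node `j` is infected (`t j < ∞`)
iff the in-component of `j` in the epidemic percolation network (directed edge
`i → j` iff `τ i j < ∞`) contains a node `i` with finite importation time. -/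
theorem sir_infection_iff_inComponent
    {n : ℕ} (τ : Fin n → Fin n → ℝ≥0∞) (hτ : ∀ i j, 0 < τ i j)
    (t0 : Fin n → ℝ≥0∞) (t : Fin n → ℝ≥0∞)
    (hfix : ∀ j, t j = min (t0 j) (⨅ i : {i : Fin n // i ≠ j}, t i + τ i j))
    (hmin : ∀ s : Fin n → ℝ≥0∞,
      (∀ j, s j = min (t0 j) (⨅ i : {i : Fin n // i ≠ j}, s i + τ i j)) →
      ∀ j, t j ≤ s j) :
    ∀ j : Fin n,
      t j < ⊤ ↔
        ∃ i ∈ {i : Fin n |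
            ReflTransGen (fun a b : Fin n => a ≠ b ∧ τ a b < ⊤) i j},
          t0 i < ⊤ := by
  -- abbreviations
  set E : Fin n → Fin n → Prop := fun a b => a ≠ b ∧ τ a b < ⊤ with hE
  have ht_le_t0 : ∀ j, t j ≤ t0 j := fun j => (hfix j) ▸ min_le_left _ _
  have ht_edge : ∀ i j, i ≠ j → t j ≤ t i + τ i j := by
    intro i j hij
    calc t j ≤ ⨅ i : {i : Fin n // i ≠ j}, t i + τ i j := (hfix j) ▸ min_le_right _ _
    _ ≤ t i + τ i j := iInf_le (fun i : {i : Fin n // i ≠ j} => t i + τ i j) ⟨i, hij⟩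
  -- a positive lower bound for all finite edge weights
  set ε : ℝ≥0∞ := min 1 (⨅ p : {p : Fin n × Fin n // τ p.1 p.2 < ⊤}, τ p.1.1 p.1.2)
    with hεdef
  have hε1 : ε ≤ 1 := min_le_left _ _
  have hεpos : 0 < ε := by
    rcases isEmpty_or_nonempty {p : Fin n × Fin n // τ p.1 p.2 < ⊤} with h | h
    · rw [hεdef, iInf_of_empty]
      simp
    · obtain ⟨p0, hp0⟩ := Finite.exists_min (fun p : {p : Fin n × Fin n // τ p.1 p.2 < ⊤} =>
        τ p.1.1 p.1.2)
      have : 0 < ⨅ p : {p : Fin n × Fin n // τ p.1 p.2 < ⊤}, τ p.1.1 p.1.2 :=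
        lt_of_lt_of_le (hτ _ _) (le_iInf hp0)
      exact lt_min one_pos this
  have hεedge : ∀ i j, τ i j < ⊤ → ε ≤ τ i j := by
    intro i j hij
    exact le_trans (min_le_right _ _)
      (iInf_le (fun p : {p : Fin n × Fin n // τ p.1 p.2 < ⊤} => τ p.1.1 p.1.2) ⟨(i, j), hij⟩)
  intro j
  constructor
  · -- forward: contrapositive via the ε-growth argument
    intro htj
    by_contra hgood
    push_neg at hgood
    simp only [Set.mem_setOf_eq] at hgood
    -- Bad j means nothing on a path to j has finite importation
    have key : ∀ m : ℕ, ∀ k : Fin n,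
        (∀ i, ReflTransGen E i k → ¬ t0 i < ⊤) → (m : ℝ≥0∞) * ε ≤ t k := by
      intro m
      induction m with
      | zero => intro k _; simp
      | succ m ih =>
        intro k hbad
        have ht0k : t0 k = ⊤ := top_le_iff.mp (not_lt.mp (hbad k ReflTransGen.refl))
        have : t k = ⨅ i : {i : Fin n // i ≠ k}, t i + τ i k := by
          rw [hfix k, ht0k]
          simp
        rw [this]
        refine le_iInf fun ⟨i, hik⟩ => ?_
        rcases lt_or_ge (τ i k) ⊤ with hfin | hinf
        · have hbadi : ∀ i', ReflTransGen E i' i → ¬ t0 i' < ⊤ := by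
            intro i' hpath
            exact hbad i' (hpath.tail ⟨hik, hfin⟩)
          have h1 : (m : ℝ≥0∞) * ε ≤ t i := ih i hbadi
          have h2 : ε ≤ τ i k := hεedge i k hfin
          calc ((m + 1 : ℕ) : ℝ≥0∞) * ε = (m : ℝ≥0∞) * ε + ε := by
                push_cast; ring
          _ ≤ t i + τ i k := add_le_add h1 h2
        · have : τ i k = ⊤ := top_le_iff.mp hinf
          simp [this]
    have hAll : ∀ m : ℕ, (m : ℝ≥0∞) * ε ≤ t j := by
      intro m
      exact key m j fun i hp => not_lt.mpr (hgood i hp)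
    -- derive contradiction: t j < ⊤ but ≥ m ε for all m
    have hεne : ε ≠ 0 := hεpos.ne'
    have hεnetop : ε ≠ ⊤ := (lt_of_le_of_lt hε1 one_lt_top).ne
    have hdiv : t j / ε ≠ ⊤ := (ENNReal.div_lt_top htj.ne hεne).ne
    obtain ⟨m, hm⟩ := ENNReal.exists_nat_gt hdiv
    have : t j < (m : ℝ≥0∞) * ε := by
      rwa [ENNReal.div_lt_iff (Or.inl hεne) (Or.inl hεnetop)] at hm
    exact absurd (hAll m) (not_le.mpr this)
  · -- backward: along the path, infection times stay finite
    rintro ⟨i, hpath, ht0i⟩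
    simp only [Set.mem_setOf_eq] at hpath
    induction hpath with
    | refl => exact lt_of_le_of_lt (ht_le_t0 i) ht0i
    | tail hp hedge ih =>
      rename_i b c
      exact lt_of_le_of_lt (ht_edge b c hedge.1)
        (ENNReal.add_lt_top.mpr ⟨ih, hedge.2⟩)
end

section
/- For a subcritical purely directed network with degree pgf G(x,y), define G_f(1,y) = (1/⟨k⟩)·G^{(1,0)}(1,y) and let H_f satisfy H_f(z) = z·G_f(1,H_f(z)) with H_f(1) = 1, and H(z) = z·G(1,H_f(z)). If G_f^{(0,1)}(1,1) < 1, then the mean out-component size of a randomly chosen node is H'(1) = 1 + ⟨k⟩/(1 - G_f^{(0,1)}(1,1)), where ⟨k⟩ = G^{(0,1)}(1,1). -/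
/-- Mean out-component size in a subcritical purely directed network: let
`g1 y = G(1,y)` be the pgf of the outdegree of a random node, with
`g1 1 = 1` and mean `⟨k⟩ = kd = G^{(0,1)}(1,1)`, and let `gf y = G_f(1,y)`
be the forward (size-biased) pgf with `gf 1 = 1` and mean
`m = G_f^{(0,1)}(1,1) < 1`.  If `Hf` satisfies `Hf z = z * gf (Hf z)` on
`[0,1]` with `Hf 1 = 1` and is differentiable from the left at 1, and
`H z = z * g1 (Hf z)`, then the mean out-component size of a randomly
chosen node is `H'(1) = 1 + kd / (1 - m)`. -/
theorem mean_out_component_size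
    (g1 gf : ℝ → ℝ) (kd m : ℝ) (hkd : 0 < kd) (hm : m < 1)
    (hg1norm : g1 1 = 1) (hgfnorm : gf 1 = 1)
    (hg1mean : HasDerivAt g1 kd 1) (hgfmean : HasDerivAt gf m 1)
    (Hf H : ℝ → ℝ)
    (hHfnorm : Hf 1 = 1)
    (hHffix : ∀ z ∈ Set.Icc (0:ℝ) 1, Hf z = z * gf (Hf z))
    (hHfdiff : DifferentiableWithinAt ℝ Hf (Set.Iic (1:ℝ)) 1)
    (hH : ∀ z, H z = z * g1 (Hf z)) :
    HasDerivWithinAt H (1 + kd / (1 - m)) (Set.Iic (1:ℝ)) 1 := by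
  set d := derivWithin Hf (Set.Iic (1:ℝ)) 1 with hd
  have hdd : HasDerivWithinAt Hf d (Set.Iic (1:ℝ)) 1 := hHfdiff.hasDerivWithinAt
  -- derivative of z ↦ z * gf (Hf z) within Iic 1 at 1
  have hgf1 : HasDerivAt gf m (Hf 1) := by rw [hHfnorm]; exact hgfmean
  have hcomp : HasDerivWithinAt (fun z => gf (Hf z)) (m * d) (Set.Iic (1:ℝ)) 1 :=
    hgf1.comp_hasDerivWithinAt 1 hdd
  have hprod : HasDerivWithinAt (fun z => z * gf (Hf z))
      (1 * gf (Hf 1) + 1 * (m * d)) (Set.Iic (1:ℝ)) 1 :=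
    (hasDerivWithinAt_id 1 _).mul hcomp
  have hmem : Set.Icc (0:ℝ) 1 ∈ nhdsWithin 1 (Set.Iic (1:ℝ)) := by
    have : Set.Ici (0:ℝ) ∈ nhds (1:ℝ) := Ici_mem_nhds (by norm_num)
    have h2 : Set.Ici (0:ℝ) ∈ nhdsWithin 1 (Set.Iic (1:ℝ)) :=
      nhdsWithin_le_nhds this
    have h3 : Set.Iic (1:ℝ) ∈ nhdsWithin 1 (Set.Iic (1:ℝ)) := self_mem_nhdsWithin
    have := Filter.inter_mem h2 h3
    rwa [Set.Ici_inter_Iic] at this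
  have heq : Hf =ᶠ[nhdsWithin 1 (Set.Iic (1:ℝ))] fun z => z * gf (Hf z) := by
    filter_upwards [hmem] with z hz using hHffix z hz
  have hdd2 : HasDerivWithinAt Hf (1 * gf (Hf 1) + 1 * (m * d)) (Set.Iic (1:ℝ)) 1 :=
    hprod.congr_of_eventuallyEq heq (hHffix 1 (by norm_num))
  have hud : UniqueDiffWithinAt ℝ (Set.Iic (1:ℝ)) 1 :=
    uniqueDiffOn_Iic 1 1 Set.self_mem_Iic
  have hde : d = 1 * gf (Hf 1) + 1 * (m * d) := hdd2.derivWithin hud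
  rw [hHfnorm, hgfnorm] at hde
  have hm1 : (1 : ℝ) - m ≠ 0 := by linarith
  have hdval : d = 1 / (1 - m) := by field_simp; linarith
  -- now H
  have hg11 : HasDerivAt g1 kd (Hf 1) := by rw [hHfnorm]; exact hg1mean
  have hcomp2 : HasDerivWithinAt (fun z => g1 (Hf z)) (kd * d) (Set.Iic (1:ℝ)) 1 :=
    hg11.comp_hasDerivWithinAt 1 hdd
  have hprod2 : HasDerivWithinAt (fun z => z * g1 (Hf z))
      (1 * g1 (Hf 1) + 1 * (kd * d)) (Set.Iic (1:ℝ)) 1 :=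
    (hasDerivWithinAt_id 1 _).mul hcomp2
  have hHeq : H = fun z => z * g1 (Hf z) := funext hH
  rw [hHfnorm, hg1norm, hdval] at hprod2
  have : 1 * 1 + 1 * (kd * (1 / (1 - m))) = 1 + kd / (1 - m) := by
    field_simp
  rw [hHeq]
  rwa [this] at hprod2
end

section
/- Let G(x,y) = e^{R₀(x-1)} · G^{out}(y) with G^{out}(1) = 1 and (G^{out})'(1) = R₀, where G^{out}(y) = ∫_0^∞ e^{R₀ r (y-1)} dF(r) for a recovery-time distribution F with mean 1. Let q_out be the smallest solution in [0,1] of y = G^{out}(y) and q_in the smallest solution in [0,1] of x = e^{R₀(x-1)}. If F is not the point mass at 1 and R₀ > 1, then q_out ≥ q_in; i.e., the probability of an epidemic, 1 - q_out, is at most its final size, 1 - q_in, with equality iff F is degenerate at 1. -/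
open MeasureTheory

/-- `r ↦ exp (c * r)` is strictly convex for `c ≠ 0`. -/
lemma strictConvexOn_exp_mul {c : ℝ} (hc : c ≠ 0) :
    StrictConvexOn ℝ Set.univ (fun r : ℝ => Real.exp (c * r)) := by
  constructor
  · exact convex_univ
  · intro x _ y _ hxy a b ha hb hab
    have hne : c * x ≠ c * y := fun h => hxy (mul_left_cancel₀ hc h)
    have := strictConvexOn_exp.2 (Set.mem_univ (c * x)) (Set.mem_univ (c * y))
      hne ha hb hab
    simpa [smul_eq_mul, mul_add, mul_comm, mul_left_comm, mul_assoc] using this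

/-- If the Poisson pgf dips below the diagonal at some `q ∈ [0,1]`, then there is
a fixed point strictly below `q`. -/
lemma exists_fixed_point_lt {R0 q : ℝ} (hq0 : 0 ≤ q) (hq1 : q ≤ 1)
    (hlt : Real.exp (R0 * (q - 1)) < q) :
    ∃ z ∈ {x ∈ Set.Icc (0:ℝ) 1 | Real.exp (R0 * (x - 1)) = x}, z < q := by
  set h : ℝ → ℝ := fun x => Real.exp (R0 * (x - 1)) - x with hh
  have hcont : ContinuousOn h (Set.Icc 0 q) := by
    apply Continuous.continuousOn
    fun_prop
  have h0 : 0 < h 0 := by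
    simp only [hh]
    have := Real.exp_pos (R0 * (0 - 1))
    linarith
  have hq : h q < 0 := by simp only [hh]; linarith
  obtain ⟨z, hz, hz0⟩ := intermediate_value_Icc' (by linarith : (0:ℝ) ≤ q) hcont
    (Set.mem_Icc.mpr ⟨le_of_lt hq, le_of_lt h0⟩)
  refine ⟨z, ⟨Set.mem_Icc.mpr ⟨hz.1, le_trans hz.2 hq1⟩, by
    have : Real.exp (R0 * (z - 1)) - z = 0 := hz0
    linarith⟩, ?_⟩
  rcases lt_or_eq_of_le hz.2 with h' | h'
  · exact h'
  · exfalso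
    rw [h'] at hz0
    have : Real.exp (R0 * (q - 1)) - q = 0 := hz0
    linarith

/-- Probability of an epidemic versus its final size: let `F` be a
recovery-time distribution on `[0,∞)` with mean 1 that is not the point mass
at 1, and `R₀ > 1`.  Let `q_out` be the smallest fixed point in `[0,1]` of
the outdegree pgf `G^out(y) = ∫ exp (R₀ r (y-1)) dF r`, and `q_in` the
smallest fixed point in `[0,1]` of the Poisson pgf `exp (R₀ (x-1))`.  Then
`q_in < q_out`; i.e. the probability of an epidemic, `1 - q_out`, is strictly
less than its final size, `1 - q_in` (equality would require `F` to be
degenerate at 1). -/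
theorem epidemic_probability_le_final_size
    (R0 : ℝ) (hR0 : 1 < R0)
    (F : Measure ℝ) [IsProbabilityMeasure F]
    (hsupp : ∀ᵐ r ∂F, 0 ≤ r)
    (hint : Integrable (fun r => r) F)
    (hmean : (∫ r, r ∂F) = 1)
    (hnondeg : F ≠ Measure.dirac 1)
    (qout qin : ℝ)
    (hqout : qout = sInf {y ∈ Set.Icc (0:ℝ) 1 |
      (∫ r, Real.exp (R0 * r * (y - 1)) ∂F) = y})
    (hqin : qin = sInf {x ∈ Set.Icc (0:ℝ) 1 | Real.exp (R0 * (x - 1)) = x}) :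
    qin < qout := by
  have hR0pos : (0:ℝ) < R0 := by linarith
  set Sin := {x ∈ Set.Icc (0:ℝ) 1 | Real.exp (R0 * (x - 1)) = x} with hSin
  set Sout := {y ∈ Set.Icc (0:ℝ) 1 |
      (∫ r, Real.exp (R0 * r * (y - 1)) ∂F) = y} with hSout
  have hSin_bdd : BddBelow Sin := ⟨0, fun x hx => hx.1.1⟩
  -- `qin < 1`
  have hqin_lt_one : qin < 1 := by
    set ε : ℝ := (R0 - 1) / (2 * R0) with hε
    have hεpos : 0 < ε := by
      rw [hε]; exact div_pos (by linarith) (by linarith)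
    have hεlt : ε < 1 := by
      rw [hε, div_lt_one (by linarith)]; linarith
    have key : Real.exp (R0 * ((1 - ε) - 1)) < 1 - ε := by
      have h1 : R0 * ε + 1 < Real.exp (R0 * ε) :=
        Real.add_one_lt_exp (mul_pos hR0pos hεpos).ne'
      have hA : Real.exp (R0 * ((1 - ε) - 1)) * Real.exp (R0 * ε) = 1 := by
        rw [← Real.exp_add]; ring_nf; exact Real.exp_zero
      have hprod : (1:ℝ) ≤ (1 - ε) * (1 + R0 * ε) := by
        rw [hε]
        have : (1 - (R0 - 1) / (2 * R0)) * (1 + R0 * ((R0 - 1) / (2 * R0))) - 1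
            = (R0 - 1)^2 / (4 * R0) := by
          field_simp; ring
        have h4 : 0 ≤ (R0 - 1)^2 / (4 * R0) := by positivity
        linarith
      have hE : 0 < Real.exp (R0 * ((1 - ε) - 1)) := Real.exp_pos _
      nlinarith [mul_lt_mul_of_pos_left h1 hE, mul_pos hR0pos hεpos,
        mul_pos hE (mul_pos hR0pos hεpos)]
    obtain ⟨z, hz, hzlt⟩ := exists_fixed_point_lt (by linarith) (by linarith) key
    have : qin ≤ z := by rw [hqin]; exact csInf_le hSin_bdd hz
    linarith
  -- continuity of the outdegree pgf on `[0,1]`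
  have hGcont : ContinuousOn (fun y => ∫ r, Real.exp (R0 * r * (y - 1)) ∂F)
      (Set.Icc (0:ℝ) 1) := by
    rw [continuousOn_iff_continuous_restrict]
    apply continuous_of_dominated (bound := fun _ => (1:ℝ))
    · intro y
      exact (Continuous.aestronglyMeasurable (by fun_prop))
    · intro y
      filter_upwards [hsupp] with r hr
      rw [Real.norm_eq_abs, abs_of_pos (Real.exp_pos _), Real.exp_le_one_iff]
      have hy1 : (y : ℝ) ≤ 1 := y.2.2
      nlinarith [mul_nonneg (mul_nonneg hR0pos.le hr) (sub_nonneg.mpr hy1)]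
    · exact integrable_const 1
    · exact Filter.Eventually.of_forall (fun r => by fun_prop)
  -- `Sout` is compact and nonempty, so `qout ∈ Sout`
  have hSout_eq : Sout = Set.Icc (0:ℝ) 1 ∩
      (fun y => (∫ r, Real.exp (R0 * r * (y - 1)) ∂F) - y) ⁻¹' {0} := by
    ext y; simp [hSout, sub_eq_zero, Set.mem_setOf_eq]
  have hSout_closed : IsClosed Sout := by
    rw [hSout_eq]
    exact (hGcont.sub continuousOn_id).preimage_isClosed_of_isClosed
      isClosed_Icc isClosed_singleton
  have hone : (1:ℝ) ∈ Sout := by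
    constructor
    · exact Set.mem_Icc.mpr ⟨zero_le_one, le_refl 1⟩
    · simp
  have hSout_compact : IsCompact Sout :=
    isCompact_Icc.of_isClosed_subset hSout_closed (fun y hy => hy.1)
  have hqmem : qout ∈ Sout := by
    rw [hqout]; exact hSout_compact.sInf_mem ⟨1, hone⟩
  rcases lt_or_eq_of_le hqmem.1.2 with hlt | heq
  · -- `qout < 1` : strict Jensen
    set c : ℝ := R0 * (qout - 1) with hc
    have hcneg : c < 0 := mul_neg_of_pos_of_neg hR0pos (by linarith)
    have hgi : Integrable (fun r => Real.exp (c * r)) F := by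
      apply Integrable.mono' (integrable_const (1:ℝ))
        (Continuous.aestronglyMeasurable (by fun_prop))
      filter_upwards [hsupp] with r hr
      rw [Real.norm_eq_abs, abs_of_pos (Real.exp_pos _), Real.exp_le_one_iff]
      nlinarith [mul_nonneg hr (le_of_lt (neg_pos.mpr hcneg))]
    have hjensen := (strictConvexOn_exp_mul hcneg.ne).ae_eq_const_or_map_average_lt
      (Continuous.continuousOn (by fun_prop)) isClosed_univ
      (Filter.Eventually.of_forall (fun r => Set.mem_univ r)) hint hgi
    rcases hjensen with hconst | hlt'
    · -- degenerate case: contradicts `hnondeg`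
      exfalso
      rw [average_eq_integral, hmean] at hconst
      apply hnondeg
      calc F = F.map id := (Measure.map_id).symm
        _ = F.map (fun _ => (1:ℝ)) := Measure.map_congr hconst
        _ = (F Set.univ) • Measure.dirac 1 := Measure.map_const F 1
        _ = Measure.dirac 1 := by simp [measure_univ]
    · rw [average_eq_integral, average_eq_integral, hmean] at hlt'
      have heq2 : (∫ r, Real.exp (c * r) ∂F)
          = ∫ r, Real.exp (R0 * r * (qout - 1)) ∂F := by
        congr 1; funext r; congr 1; ring
      have hkey : Real.exp (R0 * (qout - 1)) < qout := by
        have := hqmem.2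
        rw [mul_one] at hlt'
        rw [heq2, this] at hlt'
        exact hlt'
      obtain ⟨z, hz, hzlt⟩ := exists_fixed_point_lt hqmem.1.1 hqmem.1.2 hkey
      have : qin ≤ z := by rw [hqin]; exact csInf_le hSin_bdd hz
      linarith
  · linarith
end
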